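/- arXiv:1812.00316 — 4 statements merged into one kernel-verified Lean document; each statement's English description precedes it below -/
import Mathlib

section
/- The Maclaurin coefficients a_n of f_0(z) = exp(z/(1-z)) satisfy the three-term recurrence n·a_n - (2n-1)·a_{n-1} + (n-2)·a_{n-2} = 0 for all n ≥ 2. -/
/-!
Differentiating `f₀(x) = exp (x / (1 - x))` gives the linear ODE `(1 - x)² f₀' = f₀` on the unit
disc. Writing `f₀'` and `f₀` as power series and comparing coefficients of `xⁿ⁺¹` (identity
theorem) gives `(n + 2) aₙ₊₂ - 2 (n + 1) aₙ₊₁ + n aₙ - aₙ₊₁ = 0`, which is the recurrence.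
-/

open FormalMultilinearSeries
open scoped NNReal

section OneSubMul

variable {R : Type*} [CommRing R] [TopologicalSpace R] [IsTopologicalRing R]

def oneSubMulCoeff (c : ℕ → R) : ℕ → R
  | 0 => c 0
  | n + 1 => c (n + 1) - c n

lemma HasSum.oneSubMulCoeff_mul_pow {c : ℕ → R} {x s : R}
    (h : HasSum (fun n => c n * x ^ n) s) :
    HasSum (fun n => oneSubMulCoeff c n * x ^ n) ((1 - x) * s) := by
  rw [← hasSum_nat_add_iff' 1]
  convert ((hasSum_nat_add_iff' 1).mpr h).sub (h.mul_left x) using 1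
  · ext n
    simp only [oneSubMulCoeff]
    ring
  · simp [oneSubMulCoeff]
    ring

end OneSubMul

section PowerSeries

variable {𝕜 : Type*} [RCLike 𝕜]

lemma hasFPowerSeriesOnBall_ofScalars_of_hasSum {c : ℕ → 𝕜} {f : 𝕜 → 𝕜} {r : ℝ≥0}
    (hr : 0 < r) (h : ∀ x : 𝕜, ‖x‖ < r → HasSum (fun n => c n * x ^ n) (f x)) :
    HasFPowerSeriesOnBall f (ofScalars 𝕜 c) 0 r where
  r_le := by
    refine ENNReal.le_of_forall_nnreal_lt fun ρ hρ => ?_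
    have hρ' : ‖((ρ : ℝ) : 𝕜)‖ < r := by
      rw [RCLike.norm_ofReal, abs_of_nonneg ρ.coe_nonneg]
      exact_mod_cast hρ
    refine (ofScalars 𝕜 c).le_radius_of_tendsto (l := 0) ?_
    have := tendsto_zero_iff_norm_tendsto_zero.mp (h _ hρ').summable.tendsto_atTop_zero
    simpa [ofScalars_norm, abs_of_nonneg ρ.coe_nonneg] using this
  r_pos := by exact_mod_cast hr
  hasSum {y} hy := by
    rw [Metric.eball_coe, mem_ball_zero_iff] at hy
    simpa [ofScalars_apply_eq, mul_comm] using h y hy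

lemma eq_of_hasSum_mul_pow {c c' : ℕ → 𝕜} {f : 𝕜 → 𝕜} {r : ℝ≥0} (hr : 0 < r)
    (h : ∀ x : 𝕜, ‖x‖ < r → HasSum (fun n => c n * x ^ n) (f x))
    (h' : ∀ x : 𝕜, ‖x‖ < r → HasSum (fun n => c' n * x ^ n) (f x)) : c = c' :=
  ofScalars_series_injective 𝕜 𝕜 <|
    (hasFPowerSeriesOnBall_ofScalars_of_hasSum hr h).hasFPowerSeriesAt.eq_formalMultilinearSeries
      (hasFPowerSeriesOnBall_ofScalars_of_hasSum hr h').hasFPowerSeriesAt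

end PowerSeries

lemma HasFPowerSeriesOnBall.hasSum_deriv_ofScalars {𝕜 : Type*} [NontriviallyNormedField 𝕜]
    [CompleteSpace 𝕜] {c : ℕ → 𝕜} {f : 𝕜 → 𝕜} {r : ℝ≥0}
    (hf : HasFPowerSeriesOnBall f (ofScalars 𝕜 c) 0 r) {x : 𝕜} (hx : ‖x‖ < r) :
    HasSum (fun n => ((n + 1) * c (n + 1)) * x ^ n) (deriv f x) := by
  rw [← mem_ball_zero_iff, ← Metric.eball_coe] at hx
  simpa [apply_eq_pow_smul_coeff, mul_comm] using
    (ContinuousLinearMap.apply 𝕜 𝕜 (1 : 𝕜)).hasSum (hf.fderiv.hasSum hx)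

lemma hasDerivAt_exp_div_one_sub {x : ℝ} (hx : x ≠ 1) :
    HasDerivAt (fun y => Real.exp (y / (1 - y))) (Real.exp (x / (1 - x)) / (1 - x) ^ 2) x := by
  have h1x : 1 - x ≠ 0 := sub_ne_zero.mpr hx.symm
  convert ((hasDerivAt_id' x).fun_div ((hasDerivAt_const x 1).fun_sub (hasDerivAt_id' x)) h1x).exp
    using 1
  field_simp
  ring

/-- The Maclaurin coefficients `a n` of `f₀(z) = exp(z/(1-z))` satisfy the
three-term recurrence `n·aₙ - (2n-1)·aₙ₋₁ + (n-2)·aₙ₋₂ = 0` for `n ≥ 2`. -/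
theorem stmt_0 (a : ℕ → ℝ)
    (ha : ∀ x : ℝ, |x| < 1 → HasSum (fun n => a n * x ^ n) (Real.exp (x / (1 - x)))) :
    ∀ n : ℕ, 2 ≤ n →
      (n : ℝ) * a n - (2 * n - 1) * a (n - 1) + ((n : ℝ) - 2) * a (n - 2) = 0 := by
  have ha' : ∀ x : ℝ, ‖x‖ < (1 : ℝ≥0) → HasSum (fun n => a n * x ^ n) (Real.exp (x / (1 - x))) :=
    fun x hx => ha x (by simpa using hx)
  have hf := hasFPowerSeriesOnBall_ofScalars_of_hasSum one_pos ha'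
  have hode : ∀ x : ℝ, ‖x‖ < (1 : ℝ≥0) → HasSum
      (fun n => oneSubMulCoeff (oneSubMulCoeff fun n => (n + 1) * a (n + 1)) n * x ^ n)
      (Real.exp (x / (1 - x))) := by
    intro x hx
    have hx1 : x < 1 := by
      rw [Real.norm_eq_abs, NNReal.coe_one] at hx
      linarith [le_abs_self x]
    have := (hf.hasSum_deriv_ofScalars hx).oneSubMulCoeff_mul_pow.oneSubMulCoeff_mul_pow
    rwa [(hasDerivAt_exp_div_one_sub hx1.ne).deriv, ← mul_assoc, ← sq,
      mul_div_cancel₀ _ (pow_ne_zero 2 (sub_ne_zero.mpr hx1.ne'))] at this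
  have hcoeff := eq_of_hasSum_mul_pow one_pos hode ha'
  intro n hn
  obtain ⟨k, rfl⟩ := Nat.exists_eq_add_of_le' hn
  have hk := congrFun hcoeff (k + 1)
  rcases k with _ | k <;> simp [oneSubMulCoeff] at hk ⊢ <;> linarith
end

section
/- The coefficients b_n of f_1(z) = exp(1/(1-z)) E_1(1/(1-z)) satisfy n·b_n - (2n-1)·b_{n-1} + (n-2)·b_{n-2} = 0 for all n ≥ 3, and 2·b_2 - 3·b_1 + 0·b_0 = 1. -/
/-!
Since `E₁' (u) = -e^{-u}/u`, the function `F(u) = e^u E₁(u)` solves `F' = F - 1/u`; composing with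
`u = 1/(1-x)` gives `(1-x)² f₁' = f₁ - (1-x)` on `(-1, 1)`. Multiplied by `x`, both sides are
power series in `x`, namely `(1-X)² · X B'` and `X (B - 1 + X)` for `B = ∑ bₙ Xⁿ`, so by the identity
theorem for power series they agree coefficientwise; the coefficient of `X^(n+2)` reads
`(n+2) b_{n+2} - (2n+3) b_{n+1} + n bₙ = [n = 0]`.
-/

noncomputable def E1 (x : ℝ) : ℝ := ∫ t in Set.Ioi x, Real.exp (-t) / t

open Set MeasureTheory
open scoped NNReal ENNReal

theorem hasDerivAt_setIntegral_Ioi {E : Type*} [NormedAddCommGroup E] [NormedSpace ℝ E]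
    [CompleteSpace E] {f : ℝ → E} {a x : ℝ} (hf : IntegrableOn f (Ioi a)) (hax : a < x)
    (hcont : ContinuousAt f x) :
    HasDerivAt (fun y => ∫ t in Ioi y, f t) (-f x) x := by
  have hint : IntervalIntegrable f volume a x :=
    (intervalIntegrable_iff_integrableOn_Ioc_of_le hax.le).2 (hf.mono_set Ioc_subset_Ioi_self)
  have hmeas : StronglyMeasurableAtFilter f (nhds x) volume :=
    ⟨Ioi a, Ioi_mem_nhds hax, hf.aestronglyMeasurable⟩
  refine ((intervalIntegral.integral_hasDerivAt_right hint hmeas hcont).const_sub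
    (∫ t in Ioi a, f t)).congr_of_eventuallyEq ?_
  filter_upwards [Ioi_mem_nhds hax] with y hy
  rw [← intervalIntegral.integral_interval_add_Ioi hf (hf.mono_set (Ioi_subset_Ioi hy.le)),
    add_sub_cancel_left]

theorem integrableOn_exp_neg_div_Ioi {a : ℝ} (ha : 0 < a) :
    IntegrableOn (fun t => Real.exp (-t) / t) (Ioi a) := by
  have hcont : ContinuousOn (fun t => Real.exp (-t) / t) (Ioi a) :=
    continuousOn_id.neg.rexp.div continuousOn_id fun t ht => (ha.trans ht).ne'
  refine ((exp_neg_integrableOn_Ioi a one_pos).const_mul a⁻¹).mono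
    (hcont.aestronglyMeasurable measurableSet_Ioi) ?_
  filter_upwards [ae_restrict_mem measurableSet_Ioi] with t ht
  have ht0 : 0 < t := ha.trans ht
  rw [Real.norm_of_nonneg (by positivity), Real.norm_of_nonneg (by positivity), neg_one_mul,
    div_eq_inv_mul]
  gcongr
  exact ht.le

theorem hasDerivAt_E1 {x : ℝ} (hx : 0 < x) : HasDerivAt E1 (-(Real.exp (-x) / x)) x :=
  hasDerivAt_setIntegral_Ioi (integrableOn_exp_neg_div_Ioi (half_pos hx)) (half_lt_self hx)
    ((Real.continuous_exp.comp continuous_neg).continuousAt.div continuousAt_id hx.ne')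

theorem hasDerivAt_exp_mul_E1 {u : ℝ} (hu : 0 < u) :
    HasDerivAt (fun u => Real.exp u * E1 u) (Real.exp u * E1 u - u⁻¹) u := by
  refine ((Real.hasDerivAt_exp u).mul (hasDerivAt_E1 hu)).congr_deriv ?_
  rw [Real.exp_neg]
  field_simp
  ring

noncomputable def f1 (x : ℝ) : ℝ := Real.exp (1 / (1 - x)) * E1 (1 / (1 - x))

theorem hasDerivAt_f1 {x : ℝ} (hx : x < 1) :
    HasDerivAt f1 ((f1 x - (1 - x)) / (1 - x) ^ 2) x := by
  have h1x : 1 - x ≠ 0 := (sub_pos.2 hx).ne'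
  have hinv : HasDerivAt (fun y : ℝ => 1 / (1 - y)) (1 / (1 - x) ^ 2) x := by
    simp only [one_div]
    exact (((hasDerivAt_id x).const_sub 1).inv h1x).congr_deriv (by simp)
  refine ((hasDerivAt_exp_mul_E1 (one_div_pos.2 (sub_pos.2 hx))).comp x hinv).congr_deriv ?_
  simp only [f1, one_div, inv_inv]
  field_simp

namespace PowerSeries

section Algebraic

variable {R : Type*} [CommRing R] [TopologicalSpace R]

def HasSumAt (P : R⟦X⟧) (x s : R) : Prop :=
  HasSum (fun n => coeff n P * x ^ n) s

theorem hasSumAt_one (x : R) : HasSumAt 1 x 1 := by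
  unfold HasSumAt
  convert hasSum_ite_eq 0 (1 : R) using 2 with n
  rw [coeff_one]
  split_ifs with hn <;> simp [hn]

variable [IsTopologicalRing R] {P Q : R⟦X⟧} {x s t : R}

theorem HasSumAt.add (hP : HasSumAt P x s) (hQ : HasSumAt Q x t) :
    HasSumAt (P + Q) x (s + t) := by
  simpa only [HasSumAt, map_add, add_mul] using HasSum.add hP hQ

theorem HasSumAt.sub (hP : HasSumAt P x s) (hQ : HasSumAt Q x t) :
    HasSumAt (P - Q) x (s - t) := by
  simpa only [HasSumAt, map_sub, sub_mul] using HasSum.sub hP hQ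

theorem HasSumAt.C_mul (a : R) (hP : HasSumAt P x s) : HasSumAt (C a * P) x (a * s) := by
  simpa only [HasSumAt, coeff_C_mul, mul_assoc] using hP.mul_left a

theorem HasSumAt.X_mul (hP : HasSumAt P x s) : HasSumAt (X * P) x (x * s) := by
  refine (hasSum_nat_add_iff' 1).1 ?_
  simp only [coeff_succ_X_mul, Finset.range_one, Finset.sum_singleton, coeff_zero_X_mul,
    zero_mul, sub_zero]
  exact (hP.mul_left x).congr_fun fun n => by ring

theorem HasSumAt.polynomial_mul (q : Polynomial R) (hP : HasSumAt P x s) :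
    HasSumAt ((q : R⟦X⟧) * P) x (q.eval x * s) := by
  induction q using Polynomial.induction_on with
  | C a => simpa only [Polynomial.coe_C, Polynomial.eval_C] using hP.C_mul a
  | add p q hp hq => simpa only [Polynomial.coe_add, Polynomial.eval_add, add_mul] using hp.add hq
  | monomial n a h =>
    simpa only [Polynomial.coe_mul, Polynomial.coe_pow, Polynomial.coe_X, Polynomial.eval_mul,
      Polynomial.eval_pow, Polynomial.eval_X, pow_succ, mul_assoc, mul_left_comm _ X,
      mul_left_comm _ x] using h.X_mul

end Algebraic

section Analytic

open FormalMultilinearSeries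

variable {𝕜 : Type*} [DenselyNormedField 𝕜] {P : 𝕜⟦X⟧} {f : 𝕜 → 𝕜} {r : ℝ≥0}

theorem hasFPowerSeriesOnBall_of_hasSumAt (hr : 0 < r)
    (h : ∀ x : 𝕜, ‖x‖ < r → HasSumAt P x (f x)) :
    HasFPowerSeriesOnBall f (ofScalars 𝕜 (coeff · P)) 0 r where
  r_le := by
    refine ENNReal.le_of_forall_nnreal_lt fun ρ hρ => ?_
    obtain ⟨x, hρx, hxr⟩ := NormedField.exists_lt_norm_lt 𝕜 ρ.coe_nonneg (r₂ := r)
      (by exact_mod_cast hρ)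
    have hlim := (h x hxr).summable.tendsto_atTop_zero.norm
    rw [norm_zero] at hlim
    calc (ρ : ℝ≥0∞) ≤ ‖x‖₊ := by exact_mod_cast hρx.le
      _ ≤ _ := le_radius_of_tendsto _ (hlim.congr fun n => by
          rw [coe_nnnorm, ofScalars_norm, norm_mul, norm_pow])
  r_pos := by exact_mod_cast hr
  hasSum {y} hy := by
    have hyr : ‖y‖ < r := by
      rw [Metric.mem_eball, edist_zero_right, enorm_eq_nnnorm, ENNReal.coe_lt_coe] at hy
      exact_mod_cast hy
    simpa only [ofScalars_apply_eq, smul_eq_mul, zero_add, mul_comm] using (h y hyr).congr_fun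
      fun n => mul_comm _ _

theorem eq_zero_of_hasSumAt_zero (hr : 0 < r) (h : ∀ x : 𝕜, ‖x‖ < r → HasSumAt P x 0) :
    P = 0 := by
  have h0 := (hasFPowerSeriesOnBall_of_hasSumAt (f := 0) hr h).hasFPowerSeriesAt.eq_zero
  ext n
  simpa using congrFun ((ofScalars_series_eq_zero 𝕜).1 h0) n

-- The derivative series evaluated on the diagonal `(x, …, x)` carries `x ^ (n + 1)`, hence the
-- factor `X`.
theorem hasSumAt_X_mul_derivative [CompleteSpace 𝕜] (hr : 0 < r)
    (h : ∀ x : 𝕜, ‖x‖ < r → HasSumAt P x (f x)) {x : 𝕜} (hx : ‖x‖ < r) :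
    HasSumAt (X * d⁄dX 𝕜 P) x (x * deriv f x) := by
  have hf := hasFPowerSeriesOnBall_of_hasSumAt hr h
  have hx' : x ∈ Metric.eball (0 : 𝕜) r := by
    rw [Metric.mem_eball, edist_zero_right, enorm_eq_nnnorm, ENNReal.coe_lt_coe]
    exact_mod_cast hx
  have hderiv := (hf.fderiv.hasSum hx').mapL (ContinuousLinearMap.apply 𝕜 𝕜 x)
  unfold HasSumAt
  refine (hasSum_nat_add_iff' 1).1 ?_
  simp only [coeff_succ_X_mul, Finset.range_one, Finset.sum_singleton, coeff_zero_X_mul,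
    zero_mul, sub_zero, coeff_derivative]
  rw [zero_add, ContinuousLinearMap.apply_apply, fderiv_eq_smul_deriv, smul_eq_mul] at hderiv
  refine hderiv.congr_fun fun n => ?_
  rw [ContinuousLinearMap.apply_apply, derivSeries_apply_diag, ofScalars_apply_eq, nsmul_eq_mul]
  push_cast
  ring

end Analytic

section Recurrence

variable {R : Type*} [CommRing R]

theorem coeff_X_mul_derivative (B : R⟦X⟧) (n : ℕ) :
    coeff n (X * d⁄dX R B) = n * coeff n B := by
  cases n with
  | zero => simp
  | succ n => rw [coeff_succ_X_mul, coeff_derivative, mul_comm]; push_cast; ring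

theorem coeff_one_sub_X_sq_mul (P : R⟦X⟧) (n : ℕ) :
    coeff (n + 2) ((1 - X) ^ 2 * P) = coeff (n + 2) P - 2 * coeff (n + 1) P + coeff n P := by
  have hP : (1 - X) ^ 2 * P = P - C 2 * (X * P) + X * (X * P) := by rw [map_ofNat]; ring
  rw [hP, map_add, map_sub, coeff_C_mul, coeff_succ_X_mul, coeff_succ_X_mul, coeff_succ_X_mul]

theorem coeff_recurrence_of_X_mul_ode {B : R⟦X⟧}
    (h : (1 - X) ^ 2 * (X * d⁄dX R B) = X * (B - (1 - X))) (n : ℕ) :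
    (n + 2) * coeff (n + 2) B - (2 * n + 3) * coeff (n + 1) B + n * coeff n B =
      if n = 0 then 1 else 0 := by
  have hn := congrArg (coeff (n + 2)) h
  rw [coeff_one_sub_X_sq_mul, coeff_X_mul_derivative, coeff_X_mul_derivative,
    coeff_X_mul_derivative, coeff_succ_X_mul, map_sub, map_sub, coeff_one, coeff_X] at hn
  simp only [Nat.add_eq_zero_iff, one_ne_zero, and_false, if_false, Nat.add_eq_right] at hn
  push_cast at hn
  split_ifs at hn ⊢ <;> linear_combination hn

end Recurrence

end PowerSeries

open PowerSeries in
theorem X_mul_ode_of_hasSumAt_f1 {B : ℝ⟦X⟧}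
    (h : ∀ x : ℝ, ‖x‖ < (1 : ℝ≥0) → HasSumAt B x (f1 x)) :
    (1 - X) ^ 2 * (X * d⁄dX ℝ B) = X * (B - (1 - X)) := by
  rw [← sub_eq_zero]
  refine eq_zero_of_hasSumAt_zero one_pos fun x hx => ?_
  have hx1 : x < 1 := by
    rw [NNReal.coe_one, Real.norm_eq_abs] at hx
    exact (abs_lt.1 hx).2
  have hsum := ((hasSumAt_X_mul_derivative one_pos h hx).polynomial_mul
    ((1 - Polynomial.X) ^ 2)).sub
    ((h x hx).sub ((hasSumAt_one x).polynomial_mul (1 - Polynomial.X))).X_mul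
  push_cast at hsum
  rw [(hasDerivAt_f1 hx1).deriv] at hsum
  simp only [Polynomial.eval_pow, Polynomial.eval_sub, Polynomial.eval_one, Polynomial.eval_X,
    mul_one] at hsum
  convert hsum using 1
  have h1x : 1 - x ≠ 0 := (sub_pos.2 hx1).ne'
  field_simp
  ring

/-- The Maclaurin coefficients `b n` of `f₁(z) = exp(1/(1-z)) E₁(1/(1-z))` satisfy
`n·bₙ - (2n-1)·bₙ₋₁ + (n-2)·bₙ₋₂ = 0` for `n ≥ 3`, and `2·b₂ - 3·b₁ + 0·b₀ = 1`. -/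
theorem stmt_7 (b : ℕ → ℝ)
    (hb : ∀ x : ℝ, |x| < 1 → HasSum (fun n => b n * x ^ n)
      (Real.exp (1 / (1 - x)) * E1 (1 / (1 - x)))) :
    (∀ n : ℕ, 3 ≤ n →
      (n : ℝ) * b n - (2 * n - 1) * b (n - 1) + ((n : ℝ) - 2) * b (n - 2) = 0) ∧
    2 * b 2 - 3 * b 1 + 0 * b 0 = 1 := by
  have hB : ∀ x : ℝ, ‖x‖ < (1 : ℝ≥0) → (PowerSeries.mk b).HasSumAt x (f1 x) := by
    intro x hx
    rw [NNReal.coe_one, Real.norm_eq_abs] at hx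
    simp only [PowerSeries.HasSumAt, PowerSeries.coeff_mk]
    exact hb x hx
  have hrec := PowerSeries.coeff_recurrence_of_X_mul_ode (X_mul_ode_of_hasSumAt_f1 hB)
  simp only [PowerSeries.coeff_mk] at hrec
  refine ⟨fun n hn => ?_, ?_⟩
  · obtain ⟨m, rfl⟩ := Nat.exists_eq_add_of_le' hn
    have hm := hrec (m + 1)
    rw [if_neg m.succ_ne_zero] at hm
    rw [show m + 3 - 1 = m + 2 by omega, show m + 3 - 2 = m + 1 by omega]
    push_cast at hm ⊢
    linear_combination hm
  · simpa using hrec 0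
end

section
/- For all n ≥ 1, b_n < 0 and b_n > -1/n; in particular b_n → 0 as n → ∞. -/
/-!
Substituting `t = y + s / (1 - s)` in `E₁` gives
`e^y E₁(y) = ∫₀¹ w(s) / ((1 - s) (y (1 - s) + s)) ds` with `w(s) = exp (-s / (1 - s))`.
At `y = 1 / (1 - x)` the integrand splits as `w(s) / (1 - s) - x w(s) / (1 - s x)`, and expanding
`1 / (1 - s x)` as a geometric series identifies `b_{m+1} = -∫₀¹ w(s) sᵐ ds`. Since `0 < w < 1`
on `(0, 1)`, this moment lies strictly between `0` and `∫₀¹ sᵐ ds = 1 / (m + 1)`.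
-/

open MeasureTheory Set

theorem hasFPowerSeriesAt_ofScalars_of_hasSum {𝕜 : Type*} [NontriviallyNormedField 𝕜]
    {f : 𝕜 → 𝕜} {a : ℕ → 𝕜} {r : ℝ} (hr : 0 < r)
    (ha : ∀ x : 𝕜, ‖x‖ < r → HasSum (fun n => a n * x ^ n) (f x)) :
    HasFPowerSeriesAt f (FormalMultilinearSeries.ofScalars 𝕜 a) 0 := by
  rw [hasFPowerSeriesAt_iff]
  filter_upwards [Metric.ball_mem_nhds (0 : 𝕜) hr] with x hx
  simpa [FormalMultilinearSeries.coeff_ofScalars, mul_comm]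
    using ha x (mem_ball_zero_iff.mp hx)

theorem eq_of_hasSum_pow {𝕜 : Type*} [NontriviallyNormedField 𝕜]
    {f : 𝕜 → 𝕜} {a c : ℕ → 𝕜} {r : ℝ} (hr : 0 < r)
    (ha : ∀ x : 𝕜, ‖x‖ < r → HasSum (fun n => a n * x ^ n) (f x))
    (hc : ∀ x : 𝕜, ‖x‖ < r → HasSum (fun n => c n * x ^ n) (f x)) : a = c :=
  FormalMultilinearSeries.ofScalars_series_injective 𝕜 𝕜 <|
    (hasFPowerSeriesAt_ofScalars_of_hasSum hr ha).eq_formalMultilinearSeries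
      (hasFPowerSeriesAt_ofScalars_of_hasSum hr hc)

theorem integrableOn_Ioo_of_abs_le {f : ℝ → ℝ} {a b C : ℝ} (hf : Measurable f)
    (hC : ∀ s ∈ Ioo a b, |f s| ≤ C) : IntegrableOn f (Ioo a b) :=
  Measure.integrableOn_of_bounded measure_Ioo_lt_top.ne hf.aestronglyMeasurable
    ((ae_restrict_iff' measurableSet_Ioo).mpr (Filter.Eventually.of_forall hC))

theorem setIntegral_Ioo_pos {f : ℝ → ℝ} {a b : ℝ} (hab : a < b) (hf : IntegrableOn f (Ioo a b))
    (hpos : ∀ s ∈ Ioo a b, 0 < f s) : 0 < ∫ s in Ioo a b, f s := by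
  rw [← integral_Ioc_eq_integral_Ioo, ← intervalIntegral.integral_of_le hab.le]
  exact intervalIntegral.intervalIntegral_pos_of_pos_on
    ((intervalIntegrable_iff_integrableOn_Ioo_of_le hab.le).mpr hf) hpos hab

theorem integral_Ioo_zero_one_pow (m : ℕ) : ∫ s in Ioo (0 : ℝ) 1, s ^ m = 1 / (m + 1) := by
  rw [← integral_Ioc_eq_integral_Ioo, ← intervalIntegral.integral_of_le zero_le_one,
    integral_pow]
  norm_num

theorem hasSum_integral_mul_pow {w : ℝ → ℝ} (hw : IntegrableOn w (Ioo 0 1)) {x : ℝ}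
    (hx : |x| < 1) :
    HasSum (fun m => (∫ s in Ioo 0 1, w s * s ^ m) * x ^ m)
      (∫ s in Ioo 0 1, w s / (1 - s * x)) := by
  simp_rw [← integral_mul_const]
  refine hasSum_integral_of_dominated_convergence (fun m s => |w s| * |x| ^ m)
    (fun m => (hw.aestronglyMeasurable.mul (by fun_prop)).mul_const _) (fun m => ?_)
    (Filter.Eventually.of_forall fun s =>
      (summable_geometric_of_lt_one (abs_nonneg x) hx).mul_left _) ?_ ?_
  · refine (ae_restrict_iff' measurableSet_Ioo).mpr (Filter.Eventually.of_forall fun s hs => ?_)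
    rw [Real.norm_eq_abs, abs_mul, abs_mul, abs_pow, abs_pow, abs_of_pos hs.1, mul_right_comm]
    exact mul_le_of_le_one_right (by positivity) (pow_le_one₀ hs.1.le hs.2.le)
  · simp_rw [tsum_mul_left, tsum_geometric_of_lt_one (abs_nonneg x) hx]
    exact hw.norm.mul_const _
  · refine (ae_restrict_iff' measurableSet_Ioo).mpr (Filter.Eventually.of_forall fun s hs => ?_)
    have hsx : ‖s * x‖ < 1 := by
      rw [Real.norm_eq_abs, abs_mul, abs_of_pos hs.1]
      exact mul_lt_one_of_nonneg_of_lt_one_left hs.1.le hs.2 hx.le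
    simpa [mul_assoc, ← mul_pow, div_eq_mul_inv] using
      (hasSum_geometric_of_norm_lt_one hsx).mul_left (w s)

theorem image_div_one_sub_Ioo : (fun s : ℝ => s / (1 - s)) '' Ioo 0 1 = Ioi 0 := by
  ext t
  constructor
  · rintro ⟨s, ⟨hs0, hs1⟩, rfl⟩
    exact div_pos hs0 (sub_pos.mpr hs1)
  · intro (ht : 0 < t)
    refine ⟨t / (1 + t), ⟨by positivity, (div_lt_one (by positivity)).mpr (by linarith)⟩, ?_⟩
    field_simp
    ring

theorem injOn_div_one_sub : InjOn (fun s : ℝ => s / (1 - s)) (Iio 1) := by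
  intro p (hp : p < 1) q (hq : q < 1) h
  rw [div_eq_div_iff (sub_pos.mpr hp).ne' (sub_pos.mpr hq).ne'] at h
  linarith

theorem hasDerivAt_div_one_sub {s : ℝ} (hs : s ≠ 1) :
    HasDerivAt (fun s : ℝ => s / (1 - s)) (1 / (1 - s) ^ 2) s := by
  have h1s : 1 - s ≠ 0 := sub_ne_zero.mpr hs.symm
  exact ((hasDerivAt_id' s).div ((hasDerivAt_id' s).const_sub 1) h1s).congr_deriv (by ring)

noncomputable def weight (s : ℝ) : ℝ := Real.exp (-(s / (1 - s)))

theorem measurable_weight : Measurable weight := by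
  unfold weight
  fun_prop

theorem weight_pos (s : ℝ) : 0 < weight s := Real.exp_pos _

theorem weight_lt_one {s : ℝ} (hs0 : 0 < s) (hs1 : s < 1) : weight s < 1 :=
  Real.exp_lt_one_iff.mpr (neg_neg_of_pos (div_pos hs0 (sub_pos.mpr hs1)))

theorem weight_div_one_sub_le_one {s : ℝ} (hs1 : s < 1) :
    weight s / (1 - s) ≤ 1 := by
  have h1s : 0 < 1 - s := sub_pos.mpr hs1
  have hinv : (1 - s)⁻¹ = s / (1 - s) + 1 := by
    field_simp
    ring
  rw [div_le_one h1s, weight, Real.exp_neg, inv_le_comm₀ (Real.exp_pos _) h1s, hinv]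
  exact Real.add_one_le_exp _

theorem exp_mul_E1_eq_integral (y : ℝ) :
    Real.exp y * E1 y = ∫ s in Ioo 0 1, weight s / ((1 - s) * (y * (1 - s) + s)) := by
  have himage : (fun s : ℝ => y + s / (1 - s)) '' Ioo 0 1 = Ioi y := by
    rw [← image_image (y + ·), image_div_one_sub_Ioo, image_const_add_Ioi, add_zero]
  have hderiv : ∀ s ∈ Ioo (0 : ℝ) 1,
      HasDerivWithinAt (fun s => y + s / (1 - s)) (1 / (1 - s) ^ 2) (Ioo 0 1) s :=
    fun s hs => ((hasDerivAt_div_one_sub hs.2.ne).const_add y).hasDerivWithinAt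
  have hinj : InjOn (fun s : ℝ => y + s / (1 - s)) (Ioo 0 1) := fun p hp q hq h =>
    injOn_div_one_sub hp.2 hq.2 (add_left_cancel h)
  rw [E1, ← integral_const_mul, ← himage,
    integral_image_eq_integral_abs_deriv_smul measurableSet_Ioo hderiv hinj]
  refine setIntegral_congr_fun measurableSet_Ioo fun s hs => ?_
  have h1s : 1 - s ≠ 0 := sub_ne_zero.mpr hs.2.ne'
  have hden : (1 - s) ^ 2 * (y + s / (1 - s)) = (1 - s) * (y * (1 - s) + s) := by
    field_simp
  have hexp : Real.exp y * Real.exp (-(y + s / (1 - s))) = weight s := by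
    rw [weight, ← Real.exp_add, neg_add, add_neg_cancel_left]
  rw [smul_eq_mul, abs_of_nonneg (by positivity), ← hden, ← hexp, mul_div_assoc',
    mul_div_assoc', one_div_mul_eq_div, div_div]

theorem integrableOn_weight_div_one_sub_mul {x : ℝ} (hx : x ≤ 1) :
    IntegrableOn (fun s => weight s / (1 - s * x)) (Ioo 0 1) := by
  refine integrableOn_Ioo_of_abs_le (measurable_weight.div (by fun_prop)) (C := 1) fun s hs => ?_
  have h1s : 0 < 1 - s := sub_pos.mpr hs.2
  have hsx : 1 - s ≤ 1 - s * x := by nlinarith [hs.1]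
  rw [abs_of_pos (div_pos (weight_pos s) (h1s.trans_le hsx))]
  exact (div_le_div_of_nonneg_left (weight_pos s).le h1s hsx).trans
    (weight_div_one_sub_le_one hs.2)

theorem exp_mul_E1_one_div_one_sub {x : ℝ} (hx : x < 1) :
    Real.exp (1 / (1 - x)) * E1 (1 / (1 - x)) =
      (∫ s in Ioo 0 1, weight s / (1 - s)) - x * ∫ s in Ioo 0 1, weight s / (1 - s * x) := by
  have hint : IntegrableOn (fun s => weight s / (1 - s)) (Ioo 0 1) := by
    simpa using integrableOn_weight_div_one_sub_mul le_rfl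
  rw [exp_mul_E1_eq_integral, ← integral_const_mul,
    ← integral_sub hint ((integrableOn_weight_div_one_sub_mul hx.le).const_mul x)]
  refine setIntegral_congr_fun measurableSet_Ioo fun s hs => ?_
  have h1s : 1 - s ≠ 0 := (sub_pos.mpr hs.2).ne'
  have h1x : 1 - x ≠ 0 := (sub_pos.mpr hx).ne'
  have hsx : 1 - s * x ≠ 0 := by nlinarith [hs.1, hs.2]
  have hden : (1 - s) * (1 / (1 - x) * (1 - s) + s) = (1 - s) * (1 - s * x) / (1 - x) := by
    field_simp
    ring
  rw [hden]
  field_simp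
  ring

noncomputable def weightMoment (m : ℕ) : ℝ := ∫ s in Ioo 0 1, weight s * s ^ m

noncomputable def expE1Coeff : ℕ → ℝ
  | 0 => ∫ s in Ioo 0 1, weight s / (1 - s)
  | m + 1 => -weightMoment m

theorem hasSum_expE1Coeff {x : ℝ} (hx : |x| < 1) :
    HasSum (fun n => expE1Coeff n * x ^ n) (Real.exp (1 / (1 - x)) * E1 (1 / (1 - x))) := by
  have htail : HasSum (fun m => expE1Coeff (m + 1) * x ^ (m + 1))
      (-x * ∫ s in Ioo 0 1, weight s / (1 - s * x)) := by
    have hterm : ∀ m, expE1Coeff (m + 1) * x ^ (m + 1) =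
        -x * ((∫ s in Ioo 0 1, weight s * s ^ m) * x ^ m) := fun m => by
      rw [expE1Coeff, weightMoment]
      ring
    simp_rw [hterm]
    exact (hasSum_integral_mul_pow
      (by simpa using integrableOn_weight_div_one_sub_mul zero_le_one) hx).mul_left (-x)
  rw [exp_mul_E1_one_div_one_sub (abs_lt.mp hx).2]
  convert HasSum.zero_add (f := fun n => expE1Coeff n * x ^ n) htail using 1
  rw [expE1Coeff, pow_zero, mul_one, neg_mul, sub_eq_add_neg]

theorem integrableOn_weight_mul_pow (m : ℕ) :
    IntegrableOn (fun s => weight s * s ^ m) (Ioo 0 1) := by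
  refine integrableOn_Ioo_of_abs_le (measurable_weight.mul (by fun_prop)) (C := 1) fun s hs => ?_
  rw [abs_of_pos (mul_pos (weight_pos s) (pow_pos hs.1 m))]
  exact mul_le_one₀ (weight_lt_one hs.1 hs.2).le (pow_nonneg hs.1.le m)
    (pow_le_one₀ hs.1.le hs.2.le)

theorem weightMoment_pos (m : ℕ) : 0 < weightMoment m :=
  setIntegral_Ioo_pos one_pos (integrableOn_weight_mul_pow m) fun s hs =>
    mul_pos (weight_pos s) (pow_pos hs.1 m)

theorem weightMoment_lt_one_div (m : ℕ) : weightMoment m < 1 / (m + 1) := by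
  have hpow : IntegrableOn (fun s : ℝ => s ^ m) (Ioo 0 1) :=
    (continuous_pow m).integrableOn_Icc.mono_set Ioo_subset_Icc_self
  have hgap := setIntegral_Ioo_pos (f := fun s => s ^ m - weight s * s ^ m) one_pos
    (hpow.sub (integrableOn_weight_mul_pow m)) fun s hs => sub_pos.mpr (mul_lt_of_lt_one_left (pow_pos hs.1 m) (weight_lt_one hs.1 hs.2))
  rw [integral_sub hpow (integrableOn_weight_mul_pow m), integral_Ioo_zero_one_pow] at hgap
  rw [weightMoment]
  linarith

/-- For all `n ≥ 1`, `bₙ < 0` and `bₙ > -1/n`; in particular `bₙ → 0` as `n → ∞`. -/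
theorem stmt_12 (b : ℕ → ℝ)
    (hb : ∀ x : ℝ, |x| < 1 → HasSum (fun n => b n * x ^ n)
      (Real.exp (1 / (1 - x)) * E1 (1 / (1 - x)))) :
    (∀ n : ℕ, 1 ≤ n → b n < 0 ∧ b n > -1 / n) ∧
    Filter.Tendsto b Filter.atTop (nhds 0) := by
  have hcoeff : b = expE1Coeff := eq_of_hasSum_pow one_pos
    (fun x hx => hb x (by rwa [← Real.norm_eq_abs]))
    (fun x hx => hasSum_expE1Coeff (by rwa [← Real.norm_eq_abs]))
  have hbounds : ∀ n : ℕ, 1 ≤ n → b n < 0 ∧ b n > -1 / n := by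
    rintro (_ | m) hm
    · omega
    rw [hcoeff, expE1Coeff, Nat.cast_succ, neg_div]
    exact ⟨neg_neg_of_pos (weightMoment_pos m), neg_lt_neg (weightMoment_lt_one_div m)⟩
  have hlower : Filter.Tendsto (fun n : ℕ => -1 / (n : ℝ)) Filter.atTop (nhds 0) :=
    tendsto_const_div_atTop_nhds_zero_nat (-1)
  refine ⟨hbounds, tendsto_of_tendsto_of_tendsto_of_le_of_le' hlower tendsto_const_nhds ?_ ?_⟩
  · filter_upwards [Filter.eventually_ge_atTop 1] with n hn using (hbounds n hn).2.le
  · filter_upwards [Filter.eventually_ge_atTop 1] with n hn using (hbounds n hn).1.le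
end

section
/- Define r_0 = 1 and, for k ≥ 1, k·r_k = ∑_{j=0}^{k-1} β_{j,k} r_j, where β_{j,k} = 8^{2k-2j-1} α_{j,k} and α_{j,k} = (-1 + 3·2^{m-1} - 2·3^m)(τ)_{m-1}/(m-1)! + (7 - 17·2^m + 17·3^m)(τ)_m/m! + (-13 + 38·2^m - 33·3^m)(τ)_{m+1}/(m+1)! + 6(1 - 4·2^m + 3·3^m)(τ)_{m+2}/(m+2)!, with m = k - j and τ = j + 1/2. Then k!·r_k is an integer for every k ≥ 0. -/
/-- `α_{j,k}` from Corollary `explicit_dn2`: with `m = k - j` and `τ = j + 1/2`,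
`α_{j,k} = (-1 + 3·2^{m-1} - 2·3^m)(τ)_{m-1}/(m-1)! + (7 - 17·2^m + 17·3^m)(τ)_m/m!
 + (-13 + 38·2^m - 33·3^m)(τ)_{m+1}/(m+1)! + 6(1 - 4·2^m + 3·3^m)(τ)_{m+2}/(m+2)!`. -/
noncomputable def alphaJK (j k : ℕ) : ℚ :=
  let m : ℕ := k - j
  let τ : ℚ := (j : ℚ) + 1 / 2
  (-1 + 3 * 2 ^ (m - 1) - 2 * 3 ^ m) * (ascPochhammer ℚ (m - 1)).eval τ / ((m - 1).factorial : ℚ)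
  + (7 - 17 * 2 ^ m + 17 * 3 ^ m) * (ascPochhammer ℚ m).eval τ / (m.factorial : ℚ)
  + (-13 + 38 * 2 ^ m - 33 * 3 ^ m) * (ascPochhammer ℚ (m + 1)).eval τ / ((m + 1).factorial : ℚ)
  + 6 * (1 - 4 * 2 ^ m + 3 * 3 ^ m) * (ascPochhammer ℚ (m + 2)).eval τ / ((m + 2).factorial : ℚ)

/-- `β_{j,k} = 8^{2k-2j-1} α_{j,k}`. -/
noncomputable def betaJK (j k : ℕ) : ℚ := 8 ^ (2 * k - 2 * j - 1) * alphaJK j k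

/-!
Every `β_{j,k}` with `j < k` is an integer; then `k! r_k = ∑_{j<k} ((k-1)!/j!) β_{j,k} (j! r_j)`
gives the claim by strong induction on `k`.

The integrality of `β_{j,k}` rests on that of `4^ℓ (j + 1/2)_ℓ / ℓ!`. For `j = 0` this number is
the central binomial coefficient `C(2ℓ, ℓ)`, and the hockey-stick identity
`∑_{i ≤ ℓ} (τ)_i / i! = (τ + 1)_ℓ / ℓ!` passes from `j` to `j + 1`. Writing `8^{2m-1} = 2^{6m-3}`,
each of the four terms of `β_{j,j+m}` has enough powers of `2` once `m ≥ 2`; the case `m = 1` is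
an explicit polynomial in `2j + 1`.
-/

section RisingBinom

variable {K : Type*} [Field K] [CharZero K]

noncomputable def risingBinom (τ : K) (ℓ : ℕ) : K := (ascPochhammer K ℓ).eval τ / ℓ.factorial

@[simp]
lemma risingBinom_zero (τ : K) : risingBinom τ 0 = 1 := by
  simp [risingBinom]

lemma risingBinom_succ_mul (τ : K) (n : ℕ) :
    risingBinom τ (n + 1) * (n + 1) = risingBinom τ n * (τ + n) := by
  have hn : (n : K) + 1 ≠ 0 := Nat.cast_add_one_ne_zero n
  simp only [risingBinom, ascPochhammer_succ_eval, Nat.factorial_succ]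
  push_cast
  field_simp

lemma risingBinom_succ_mul_eq_mul_add_one (τ : K) (n : ℕ) :
    risingBinom τ (n + 1) * (n + 1) = τ * risingBinom (τ + 1) n := by
  have hn : (n : K) + 1 ≠ 0 := Nat.cast_add_one_ne_zero n
  simp only [risingBinom, ascPochhammer_succ_left, Polynomial.eval_mul, Polynomial.eval_X,
    Polynomial.eval_comp, Polynomial.eval_add, Polynomial.eval_one, Nat.factorial_succ]
  push_cast
  field_simp

lemma sum_range_risingBinom (τ : K) (ℓ : ℕ) :
    ∑ i ∈ Finset.range (ℓ + 1), risingBinom τ i = risingBinom (τ + 1) ℓ := by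
  induction ℓ with
  | zero => simp
  | succ n ih =>
    rw [Finset.sum_range_succ, ih]
    apply mul_right_cancel₀ (Nat.cast_add_one_ne_zero n : (n : K) + 1 ≠ 0)
    linear_combination risingBinom_succ_mul_eq_mul_add_one τ n - risingBinom_succ_mul (τ + 1) n

lemma four_pow_mul_risingBinom_half (ℓ : ℕ) :
    4 ^ ℓ * risingBinom (1 / 2 : K) ℓ = ℓ.centralBinom := by
  induction ℓ with
  | zero => simp
  | succ n ih =>
    have hcentral : ((n : K) + 1) * (n + 1).centralBinom = 2 * (2 * n + 1) * n.centralBinom := by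
      exact_mod_cast n.succ_mul_centralBinom_succ
    apply mul_right_cancel₀ (Nat.cast_add_one_ne_zero n : (n : K) + 1 ≠ 0)
    linear_combination 4 * (4 : K) ^ n * risingBinom_succ_mul (1 / 2 : K) n
      + (4 * (n : K) + 2) * ih - hcentral

lemma four_pow_mul_risingBinom_mem_bot (j ℓ : ℕ) :
    4 ^ ℓ * risingBinom ((j : K) + 1 / 2) ℓ ∈ (⊥ : Subring K) := by
  induction j generalizing ℓ with
  | zero =>
    rw [Nat.cast_zero, zero_add, four_pow_mul_risingBinom_half]
    exact natCast_mem _ _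
  | succ n ih =>
    have hsum : 4 ^ ℓ * risingBinom (((n + 1 : ℕ) : K) + 1 / 2) ℓ
        = ∑ i ∈ Finset.range (ℓ + 1),
            4 ^ (ℓ - i) * (4 ^ i * risingBinom ((n : K) + 1 / 2) i) := by
      rw [show ((n + 1 : ℕ) : K) + 1 / 2 = (n + 1 / 2) + 1 by push_cast; ring,
        ← sum_range_risingBinom, Finset.mul_sum]
      refine Finset.sum_congr rfl fun i hi => ?_
      rw [← mul_assoc, ← pow_add,
        Nat.sub_add_cancel (Nat.lt_succ_iff.mp (Finset.mem_range.mp hi))]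
    rw [hsum]
    exact Subring.sum_mem _ fun i _ => Subring.mul_mem _ (Subring.pow_mem _ (by simp) _) (ih i)

lemma two_pow_mul_risingBinom_mem_bot (j : ℕ) {ℓ e : ℕ} (h : 2 * ℓ ≤ e) :
    2 ^ e * risingBinom ((j : K) + 1 / 2) ℓ ∈ (⊥ : Subring K) := by
  have hsplit : (2 : K) ^ e = 2 ^ (e - 2 * ℓ) * 4 ^ ℓ := by
    rw [show (4 : K) = 2 ^ 2 by norm_num, ← pow_mul, ← pow_add, Nat.sub_add_cancel h]
  rw [hsplit, mul_assoc]
  exact Subring.mul_mem _ (Subring.pow_mem _ (by simp) _) (four_pow_mul_risingBinom_mem_bot j ℓ)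

end RisingBinom

lemma betaJK_self_add_one (j : ℕ) :
    betaJK j (j + 1) = ((-32 + 96 * (2 * j + 1) - 36 * ((2 * j + 1) * (2 * j + 3))
      + 2 * ((2 * j + 1) * (2 * j + 3) * (2 * j + 5)) : ℤ) : ℚ) := by
  simp only [betaJK, alphaJK, Nat.add_sub_cancel_left]
  rw [show 2 * (j + 1) - 2 * j - 1 = 1 by omega]
  norm_num [ascPochhammer_succ_eval, Nat.factorial]
  ring

lemma betaJK_self_add (j m : ℕ) :
    betaJK j (j + m) =
      (-1 + 3 * 2 ^ (m - 1) - 2 * 3 ^ m)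
        * (2 ^ (6 * m - 3) * risingBinom ((j : ℚ) + 1 / 2) (m - 1))
      + (7 - 17 * 2 ^ m + 17 * 3 ^ m)
        * (2 ^ (6 * m - 3) * risingBinom ((j : ℚ) + 1 / 2) m)
      + (-13 + 38 * 2 ^ m - 33 * 3 ^ m)
        * (2 ^ (6 * m - 3) * risingBinom ((j : ℚ) + 1 / 2) (m + 1))
      + 6 * (1 - 4 * 2 ^ m + 3 * 3 ^ m)
        * (2 ^ (6 * m - 3) * risingBinom ((j : ℚ) + 1 / 2) (m + 2)) := by
  have h8 : (8 : ℚ) ^ (2 * (j + m) - 2 * j - 1) = 2 ^ (6 * m - 3) := by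
    rw [show (8 : ℚ) = 2 ^ 3 by norm_num, ← pow_mul]
    congr 1
    omega
  simp only [betaJK, alphaJK, risingBinom, Nat.add_sub_cancel_left, h8]
  ring

lemma betaJK_mem_bot {j k : ℕ} (h : j < k) : betaJK j k ∈ (⊥ : Subring ℚ) := by
  obtain ⟨m, rfl⟩ := Nat.exists_eq_add_of_lt h
  rcases Nat.eq_zero_or_pos m with rfl | hm
  · rw [betaJK_self_add_one]
    exact intCast_mem _ _
  · have hint (z : ℤ) : (z : ℚ) ∈ (⊥ : Subring ℚ) := intCast_mem _ z
    rw [add_assoc, betaJK_self_add]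
    refine Subring.add_mem _ (Subring.add_mem _ (Subring.add_mem _ ?_ ?_) ?_) ?_ <;>
      refine Subring.mul_mem _ ?_ (two_pow_mul_risingBinom_mem_bot j (by omega))
    · exact_mod_cast hint (-1 + 3 * 2 ^ m - 2 * 3 ^ (m + 1))
    · exact_mod_cast hint (7 - 17 * 2 ^ (m + 1) + 17 * 3 ^ (m + 1))
    · exact_mod_cast hint (-13 + 38 * 2 ^ (m + 1) - 33 * 3 ^ (m + 1))
    · exact_mod_cast hint (6 * (1 - 4 * 2 ^ (m + 1) + 3 * 3 ^ (m + 1)))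

lemma factorial_mul_mem_bot_of_recurrence {R : Type*} [CommRing R] (b : ℕ → ℕ → R)
    (hb : ∀ j k, j < k → b j k ∈ (⊥ : Subring R)) (r : ℕ → R) (hr0 : r 0 ∈ (⊥ : Subring R))
    (hrec : ∀ k : ℕ, 1 ≤ k → (k : R) * r k = ∑ j ∈ Finset.range k, b j k * r j) (k : ℕ) :
    (k.factorial : R) * r k ∈ (⊥ : Subring R) := by
  induction k using Nat.strong_induction_on with
  | _ k ih =>
  rcases k with _ | n
  · simpa using hr0
  have hsum : ((n + 1).factorial : R) * r (n + 1) = ∑ j ∈ Finset.range (n + 1),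
      ((n.factorial / j.factorial : ℕ) : R) * b j (n + 1) * (j.factorial * r j) := by
    rw [Nat.factorial_succ, Nat.cast_mul, mul_comm ((n + 1 : ℕ) : R), mul_assoc,
      hrec (n + 1) n.succ_pos, Finset.mul_sum]
    refine Finset.sum_congr rfl fun j hj => ?_
    have hdiv : ((n.factorial / j.factorial : ℕ) : R) * j.factorial = n.factorial := by
      rw [← Nat.cast_mul, Nat.div_mul_cancel
        (Nat.factorial_dvd_factorial (Nat.lt_succ_iff.mp (Finset.mem_range.mp hj)))]
    linear_combination -b j (n + 1) * r j * hdiv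
  rw [hsum]
  refine Subring.sum_mem _ fun j hj => ?_
  have hj : j < n + 1 := Finset.mem_range.mp hj
  exact Subring.mul_mem _ (Subring.mul_mem _ (natCast_mem _ _) (hb j _ hj)) (ih j hj)

/-- If `r₀ = 1` and `k·r_k = ∑_{j<k} β_{j,k} r_j` for `k ≥ 1`, then `k!·r_k ∈ ℤ`
for every `k ≥ 0`. -/
theorem stmt_18 (r : ℕ → ℚ)
    (hr0 : r 0 = 1)
    (hrec : ∀ k : ℕ, 1 ≤ k → (k : ℚ) * r k = ∑ j ∈ Finset.range k, betaJK j k * r j) :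
    ∀ k : ℕ, ∃ m : ℤ, (k.factorial : ℚ) * r k = (m : ℚ) := by
  intro k
  obtain ⟨m, hm⟩ := Subring.mem_bot.mp <| factorial_mul_mem_bot_of_recurrence betaJK
    (fun _ _ => betaJK_mem_bot) r (hr0 ▸ Subring.one_mem _) hrec k
  exact ⟨m, hm.symm⟩
end
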